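/- Let 0 < p < 1/2 and q = 1 − p. Let R̃_k(z) be the polynomials defined by R̃_{−1}(z) = 1, R̃_0(z) = 1 − (1 − p²) z, and R̃_k(z) = (1 − 2 p q z) R̃_{k−1}(z) − p² q² z² R̃_{k−2}(z) for k ≥ 1. Then for every real z with 0 < z < 1/(4 p q), setting t = √(1 − 4 p q z), u = 1 + t − (1 + 3p + t + p t) q z + 2 p q² z² and v = −1 + t + (1 + 3p − t − p t) q z − 2 p q² z², one has for all k ≥ −1: R̃_k(z) = (1/(2t)) [ u ((1 − 2 p q z + t)/2)^k + v ((1 − 2 p q z − t)/2)^k ]. -/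
import Mathlib


/-- Index-shifted auxiliary polynomials of the traffic-light (`ℓ = 1`) problem:
`Rtrec p z (k+1)` is the `R̃_k(z)` of the paper: `R̃_{-1}(z) = 1`,
`R̃_0(z) = 1 - (1-p²) z`, and
`R̃_k(z) = (1 - 2pqz) R̃_{k-1}(z) - p²q²z² R̃_{k-2}(z)` for `k ≥ 1`. -/
noncomputable def Rtrec (p z : ℝ) : ℕ → ℝ
  | 0 => 1
  | 1 => 1 - (1 - p ^ 2) * z
  | (k + 2) =>
    (1 - 2 * p * (1 - p) * z) * Rtrec p z (k + 1)
      - p ^ 2 * (1 - p) ^ 2 * z ^ 2 * Rtrec p z k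

/-- Explicit solution of the traffic-light recurrence: with `t = √(1 - 4 p q z)`,
`u = 1 + t - (1 + 3p + t + pt) q z + 2 p q² z²`,
`v = -1 + t + (1 + 3p - t - pt) q z - 2 p q² z²`,
`R̃_k(z) = (1/(2t)) [u ((1 - 2pqz + t)/2)^k + v ((1 - 2pqz - t)/2)^k]` for all `k ≥ -1`. -/
theorem tl_R_closed_form (p q : ℝ) (hp0 : 0 < p) (hp : p < 1 / 2) (hq : q = 1 - p)
    (z : ℝ) (hz0 : 0 < z) (hz1 : z < 1 / (4 * p * q))
    (t u v : ℝ) (ht : t = Real.sqrt (1 - 4 * p * q * z))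
    (hu : u = 1 + t - (1 + 3 * p + t + p * t) * q * z + 2 * p * q ^ 2 * z ^ 2)
    (hv : v = -1 + t + (1 + 3 * p - t - p * t) * q * z - 2 * p * q ^ 2 * z ^ 2) :
    ∀ k : ℤ, -1 ≤ k →
      Rtrec p z (k + 1).toNat =
        1 / (2 * t) *
          (u * ((1 - 2 * p * q * z + t) / 2) ^ k +
            v * ((1 - 2 * p * q * z - t) / 2) ^ k) := by
  subst hq
  have hq0 : 0 < 1 - p := by linarith
  have hpq : 0 < 4 * p * (1 - p) := by positivity
  have h4 : 4 * p * (1 - p) * z < 1 := by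
    have := (lt_div_iff₀ hpq).mp hz1
    linarith [this]
  have ht0 : 0 < t := by
    rw [ht]; exact Real.sqrt_pos.mpr (by linarith)
  have ht' : (2 : ℝ) * t ≠ 0 := by positivity
  have hT2 : t ^ 2 = 1 - 4 * p * (1 - p) * z := by
    rw [ht, sq]; exact Real.mul_self_sqrt (by linarith)
  generalize hlp : (1 - 2 * p * (1 - p) * z + t) / 2 = lp
  generalize hlm : (1 - 2 * p * (1 - p) * z - t) / 2 = lm
  have hprod : lp * lm = (p * (1 - p) * z) ^ 2 := by
    rw [← hlp, ← hlm]; linear_combination (-1/4 : ℝ) * hT2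
  have hpz : (0 : ℝ) < (p * (1 - p) * z) ^ 2 := by positivity
  have hlp0 : lp ≠ 0 := by
    intro h; rw [h, zero_mul] at hprod; exact absurd hprod.symm (ne_of_gt hpz)
  have hlm0 : lm ≠ 0 := by
    intro h; rw [h, mul_zero] at hprod; exact absurd hprod.symm (ne_of_gt hpz)
  have hrp : lp ^ 2 = (1 - 2 * p * (1 - p) * z) * lp - (p * (1 - p) * z) ^ 2 := by
    rw [← hlp]; linear_combination (1/4 : ℝ) * hT2
  have hrm : lm ^ 2 = (1 - 2 * p * (1 - p) * z) * lm - (p * (1 - p) * z) ^ 2 := by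
    rw [← hlm]; linear_combination (1/4 : ℝ) * hT2
  have hident : u * lm + v * lp = 2 * t * (lp * lm) := by
    rw [hu, hv, ← hlp, ← hlm]; linear_combination (t / 2) * hT2
  have key : ∀ n : ℕ, Rtrec p z n =
      1 / (2 * t) * (u * lp ^ ((n : ℤ) - 1) + v * lm ^ ((n : ℤ) - 1)) := by
    have step : ∀ n : ℕ,
        (Rtrec p z n =
          1 / (2 * t) * (u * lp ^ ((n : ℤ) - 1) + v * lm ^ ((n : ℤ) - 1))) ∧
        (Rtrec p z (n + 1) =
          1 / (2 * t) * (u * lp ^ (((n : ℤ) + 1) - 1) + v * lm ^ (((n : ℤ) + 1) - 1))) := by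
      intro n
      induction n with
      | zero =>
        constructor
        · show (1 : ℝ) = 1 / (2 * t) * (u * lp ^ (((0:ℕ) : ℤ) - 1) + v * lm ^ (((0:ℕ) : ℤ) - 1))
          have he : (((0:ℕ) : ℤ) - 1) = (-1 : ℤ) := by norm_num
          rw [he, zpow_neg_one, zpow_neg_one]
          have h0 : u * lp⁻¹ + v * lm⁻¹ = (u * lm + v * lp) / (lp * lm) := by
            field_simp
            try ring
          rw [h0, hident, mul_div_assoc, div_self (mul_ne_zero hlp0 hlm0)]
          field_simp
        · show (1 - (1 - p ^ 2) * z : ℝ) =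
            1 / (2 * t) * (u * lp ^ (((0:ℕ) : ℤ) + 1 - 1) + v * lm ^ (((0:ℕ) : ℤ) + 1 - 1))
          have he : (((0:ℕ) : ℤ) + 1 - 1) = (0 : ℤ) := by norm_num
          rw [he, zpow_zero, zpow_zero]
          rw [hu, hv]
          field_simp
          ring
      | succ m ih =>
        refine ⟨ih.2, ?_⟩
        show Rtrec p z (m + 2) = _
        have e1 : (((m + 1 : ℕ) : ℤ) + 1 - 1) = (((m : ℤ)) - 1) + 2 := by push_cast; ring
        rw [e1, zpow_add₀ hlp0, zpow_add₀ hlm0,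
          show Rtrec p z (m + 2) =
            (1 - 2 * p * (1 - p) * z) * Rtrec p z (m + 1)
              - p ^ 2 * (1 - p) ^ 2 * z ^ 2 * Rtrec p z m from rfl,
          ih.1, ih.2]
        rw [show (((m : ℕ) : ℤ) + 1 - 1) = (((m : ℤ)) - 1) + 1 from by push_cast; ring,
          zpow_add₀ hlp0, zpow_add₀ hlm0]
        simp only [zpow_one, zpow_two]
        linear_combination (-(u * lp ^ ((m : ℤ) - 1) / (2 * t))) * hrp
          + (-(v * lm ^ ((m : ℤ) - 1) / (2 * t))) * hrm
    exact fun n => (step n).1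
  intro k hk
  have hn : (((k + 1).toNat : ℕ) : ℤ) = k + 1 := Int.toNat_of_nonneg (by linarith)
  have hkey := key (k + 1).toNat
  rw [hn, show k + 1 - 1 = k from by ring] at hkey
  exact hkey
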